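/- arXiv:1611.08466 — 3 statements merged into one kernel-verified Lean document; each statement's English description precedes it below -/
import Mathlib

section
/- Let R be a noetherian commutative ring, M a finitely generated R-module, and a = (a_1, …, a_r) ∈ R^r a sequence of elements of R. For n ≥ 1 write a(n) = (a_1^n, …, a_r^n). Then for every i > 0 the pro-system of Koszul homology groups n ↦ H_i(M; a(n)) is pro-zero: for every n ≥ 1 there exists m ≥ n such that the transition map H_i(M; a(m)) → H_i(M; a(n)) is the zero map. -/
/-!
`K(M; a_1, …, a_{r+1})` is the mapping cone of multiplication by `c = a_{r+1}` on `K(M; a')`,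
`a' = (a_1, …, a_r)`, and we induct on `r`. Let `x` be a cycle of degree `i + 1` of `K(M; a(m))`.
Its component `x''` at the subsets containing `r + 1` satisfies: `c ^ m • x''` is a boundary, and
for `i > 0` also `x''` is a cycle. By induction in degree `i - 1`, or for `i = 0` because the colon
submodules `(a'(n₁) M : c ^ k)` of the noetherian module `M` stabilise, the transition image of
`c ^ (m - n₁) • x''` is a boundary `d z`. Corrected by `± c ^ n₁ • z`, the other component of `x`
becomes a cycle of `K(M; a'(n₁))`, whose transition image is a boundary by induction in degree `i`;
the two primitives glue to a primitive of the transition image of `x`.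
-/

/-- The Koszul differential from degree `i + 1` to degree `i` for the sequence
`b : Fin r → R` with coefficients in `M`. -/
noncomputable def koszulD (R : Type*) [CommRing R] (M : Type*) [AddCommGroup M] [Module R M]
    {r : ℕ} (b : Fin r → R) (i : ℕ)
    (x : {s : Finset (Fin r) // s.card = i + 1} → M) :
    {s : Finset (Fin r) // s.card = i} → M :=
  fun s => ∑ j : Fin r,
    if h : j ∈ s.1 then 0
    else ((-1 : ℤ) ^ (s.1.filter (fun k => k < j)).card) •
      b j • x ⟨insert j s.1, by rw [Finset.card_insert_of_notMem h, s.2]⟩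

/-- The degree-`i` component of the transition chain map from the Koszul complex of
`(a_1^{n+e}, …, a_r^{n+e})` to that of `(a_1^n, …, a_r^n)`: on the component indexed by
`s` it is multiplication by `∏_{j ∈ s} a_j^e`. -/
noncomputable def koszulTransition (R : Type*) [CommRing R] (M : Type*) [AddCommGroup M]
    [Module R M] {r : ℕ} (a : Fin r → R) (e : ℕ) (i : ℕ)
    (x : {s : Finset (Fin r) // s.card = i} → M) :
    {s : Finset (Fin r) // s.card = i} → M :=
  fun s => (∏ j ∈ s.1, a j ^ e) • x s

theorem Submodule.exists_pow_smul_mem_of_pow_smul_mem {R M : Type*} [CommRing R]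
    [AddCommGroup M] [Module R M] [IsNoetherian R M] (N : Submodule R M) (c : R) :
    ∃ k, ∀ l, k ≤ l → ∀ v : M, c ^ l • v ∈ N → c ^ k • v ∈ N := by
  -- the kernels of the powers of `c` acting on `M ⧸ N` stabilise
  obtain ⟨k, hk⟩ := monotone_stabilizes_iff_noetherian.mpr (inferInstance : IsNoetherian R (M ⧸ N))
    (algebraMap R (Module.End R (M ⧸ N)) c).iterateKer
  have mem_ker (l : ℕ) (v : M) : N.mkQ v ∈ (algebraMap R (Module.End R (M ⧸ N)) c).iterateKer l ↔
      c ^ l • v ∈ N := by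
    simp [← map_pow, ← Submodule.Quotient.mk_smul, Submodule.Quotient.mk_eq_zero]
  exact ⟨k, fun l hl v hv => (mem_ker k v).mp (hk l hl ▸ (mem_ker l v).mpr hv)⟩

abbrev KoszulChain (M : Type*) (r i : ℕ) : Type _ := {s : Finset (Fin r) // s.card = i} → M

section Linearity

variable {R : Type*} [CommRing R] {M : Type*} [AddCommGroup M] [Module R M] {r : ℕ}

noncomputable def koszulDₗ (b : Fin r → R) (i : ℕ) :
    KoszulChain M r (i + 1) →ₗ[R] KoszulChain M r i where
  toFun := koszulD R M b i
  map_add' x y := by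
    funext s
    simp only [koszulD, Pi.add_apply, ← Finset.sum_add_distrib]
    refine Finset.sum_congr rfl fun j _ => ?_
    split_ifs <;> simp [smul_add]
  map_smul' c x := by
    funext s
    simp only [koszulD, Pi.smul_apply, Finset.smul_sum, RingHom.id_apply]
    refine Finset.sum_congr rfl fun j _ => ?_
    split_ifs
    · simp
    · rw [smul_comm (b j) c, smul_comm ((-1 : ℤ) ^ _) c]

variable (b : Fin r → R) (i : ℕ)

lemma koszulD_add (x y : KoszulChain M r (i + 1)) :
    koszulD R M b i (x + y) = koszulD R M b i x + koszulD R M b i y :=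
  map_add (koszulDₗ b i) x y

lemma koszulD_neg (x : KoszulChain M r (i + 1)) :
    koszulD R M b i (-x) = -koszulD R M b i x :=
  map_neg (koszulDₗ b i) x

lemma koszulD_smul (c : R) (x : KoszulChain M r (i + 1)) :
    koszulD R M b i (c • x) = c • koszulD R M b i x :=
  map_smul (koszulDₗ b i) c x

lemma koszulD_zsmul (c : ℤ) (x : KoszulChain M r (i + 1)) :
    koszulD R M b i (c • x) = c • koszulD R M b i x :=
  map_zsmul (koszulDₗ b i) c x

variable (a : Fin r → R) (e : ℕ)

lemma koszulTransition_add (x y : KoszulChain M r i) :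
    koszulTransition R M a e i (x + y) =
      koszulTransition R M a e i x + koszulTransition R M a e i y := by
  funext s
  simp only [koszulTransition, Pi.add_apply, smul_add]

lemma koszulTransition_smul {S : Type*} [SMul S M] [SMulCommClass R S M] (c : S)
    (x : KoszulChain M r i) :
    koszulTransition R M a e i (c • x) = c • koszulTransition R M a e i x := by
  funext s
  simp only [koszulTransition, Pi.smul_apply, smul_comm _ c]

lemma koszulTransition_koszulTransition (f : ℕ) (x : KoszulChain M r i) :
    koszulTransition R M a e i (koszulTransition R M a f i x) =
      koszulTransition R M a (e + f) i x := by
  funext s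
  simp only [koszulTransition, smul_smul, ← Finset.prod_mul_distrib, pow_add]

lemma koszulTransition_degree_zero (x : KoszulChain M r 0) : koszulTransition R M a e 0 x = x := by
  funext s
  simp [koszulTransition, Finset.card_eq_zero.mp s.2]

lemma koszulD_koszulTransition (n : ℕ) (x : KoszulChain M r (i + 1)) :
    koszulD R M (fun j => a j ^ n) i (koszulTransition R M a e (i + 1) x) =
      koszulTransition R M a e i (koszulD R M (fun j => a j ^ (n + e)) i x) := by
  funext s
  simp only [koszulD, koszulTransition, Finset.smul_sum]
  refine Finset.sum_congr rfl fun j _ => ?_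
  split_ifs with h
  · simp
  · rw [Finset.prod_insert h]
    simp only [← Int.cast_smul_eq_zsmul R, smul_smul]
    ring_nf

end Linearity

namespace KoszulChain

section Splitting

variable {M : Type*} {r : ℕ}

lemma last_notMem_map_castSuccEmb (t : Finset (Fin r)) : Fin.last r ∉ t.map Fin.castSuccEmb := by
  simp [Fin.castSucc_ne_last]

noncomputable def preimageCastSucc (s : Finset (Fin (r + 1))) : Finset (Fin r) :=
  s.preimage Fin.castSucc (Fin.castSucc_injective r).injOn

lemma preimageCastSucc_map (t : Finset (Fin r)) :
    preimageCastSucc (t.map Fin.castSuccEmb) = t := by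
  ext j
  simp [preimageCastSucc]

lemma map_preimageCastSucc {s : Finset (Fin (r + 1))} (h : Fin.last r ∉ s) :
    (preimageCastSucc s).map Fin.castSuccEmb = s := by
  ext k
  induction k using Fin.lastCases with
  | last => simpa [Fin.castSucc_ne_last] using h
  | cast j => simp [preimageCastSucc]

lemma card_preimageCastSucc {s : Finset (Fin (r + 1))} (h : Fin.last r ∉ s) :
    (preimageCastSucc s).card = s.card := by
  conv_rhs => rw [← map_preimageCastSucc h, Finset.card_map]

/- A chain of degree `i + 1` over `Fin (r + 1)` amounts to a pair of chains over `Fin r`, of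
degrees `i + 1` and `i`: its components at the subsets avoiding, resp. containing, the last index.
This is the splitting of `K(a_1, …, a_{r+1})` as the mapping cone of multiplication by `a_{r+1}`
on `K(a_1, …, a_r)`. -/
def withoutLast {i : ℕ} (x : KoszulChain M (r + 1) i) : KoszulChain M r i :=
  fun t => x ⟨t.1.map Fin.castSuccEmb, by rw [Finset.card_map, t.2]⟩

def withLast {i : ℕ} (x : KoszulChain M (r + 1) (i + 1)) : KoszulChain M r i :=
  fun t => x ⟨insert (Fin.last r) (t.1.map Fin.castSuccEmb), by
    rw [Finset.card_insert_of_notMem (last_notMem_map_castSuccEmb t.1), Finset.card_map, t.2]⟩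

noncomputable def glue {i : ℕ} (u : KoszulChain M r (i + 1)) (v : KoszulChain M r i) :
    KoszulChain M (r + 1) (i + 1) :=
  fun s =>
    if h : Fin.last r ∈ s.1 then
      v ⟨preimageCastSucc (s.1.erase (Fin.last r)), by
        rw [card_preimageCastSucc (Finset.notMem_erase _ _), Finset.card_erase_of_mem h, s.2]
        rfl⟩
    else u ⟨preimageCastSucc s.1, by rw [card_preimageCastSucc h, s.2]⟩

lemma withoutLast_glue {i : ℕ} (u : KoszulChain M r (i + 1)) (v : KoszulChain M r i) :
    withoutLast (glue u v) = u := by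
  funext t
  simp only [withoutLast, glue, dif_neg (last_notMem_map_castSuccEmb t.1)]
  exact congrArg u (Subtype.ext (preimageCastSucc_map t.1))

lemma withLast_glue {i : ℕ} (u : KoszulChain M r (i + 1)) (v : KoszulChain M r i) :
    withLast (glue u v) = v := by
  funext t
  simp only [withLast, glue, dif_pos (Finset.mem_insert_self _ _)]
  refine congrArg v (Subtype.ext ?_)
  simp only [Finset.erase_insert (last_notMem_map_castSuccEmb t.1), preimageCastSucc_map]

lemma glue_withoutLast_withLast {i : ℕ} (x : KoszulChain M (r + 1) (i + 1)) :
    glue (withoutLast x) (withLast x) = x := by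
  funext s
  by_cases h : Fin.last r ∈ s.1
  · simp only [glue, dif_pos h, withLast]
    congr 1
    ext1
    simp only [map_preimageCastSucc (Finset.notMem_erase _ _), Finset.insert_erase h]
  · simp only [glue, dif_neg h, withoutLast]
    exact congrArg x (Subtype.ext (map_preimageCastSucc h))

lemma ext_withoutLast_withLast {i : ℕ} {x y : KoszulChain M (r + 1) (i + 1)}
    (h₀ : withoutLast x = withoutLast y) (h₁ : withLast x = withLast y) : x = y := by
  rw [← glue_withoutLast_withLast x, h₀, h₁, glue_withoutLast_withLast]

end Splitting

section Cone

variable {R : Type*} [CommRing R] {M : Type*} [AddCommGroup M] [Module R M] {r : ℕ}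

lemma card_filter_map_castSuccEmb_lt (t : Finset (Fin r)) (j : Fin r) :
    ((t.map Fin.castSuccEmb).filter (· < j.castSucc)).card = (t.filter (· < j)).card := by
  rw [Finset.filter_map, Finset.card_map]
  rfl

lemma withoutLast_koszulD (b : Fin (r + 1) → R) (i : ℕ) (x : KoszulChain M (r + 1) (i + 1)) :
    withoutLast (koszulD R M b i x) =
      koszulD R M (fun j => b j.castSucc) i (withoutLast x) +
        ((-1 : ℤ) ^ i) • b (Fin.last r) • withLast x := by
  funext t
  simp only [withoutLast, withLast, koszulD, Pi.add_apply, Pi.smul_apply]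
  rw [Fin.sum_univ_castSucc, dif_neg (last_notMem_map_castSuccEmb t.1),
    Finset.filter_true_of_mem fun k hk => by
      obtain ⟨j, -, rfl⟩ := Finset.mem_map.mp hk
      exact Fin.castSucc_lt_last j,
    Finset.card_map, t.2]
  congr 1
  refine Finset.sum_congr rfl fun j _ => ?_
  by_cases h : j ∈ t.1
  · simp [h]
  · have h' : j.castSucc ∉ t.1.map Fin.castSuccEmb := by simpa using h
    rw [dif_neg h', dif_neg h, card_filter_map_castSuccEmb_lt]
    congr 3
    simp [Finset.map_insert]

lemma withLast_koszulD (b : Fin (r + 1) → R) (i : ℕ) (x : KoszulChain M (r + 1) (i + 2)) :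
    withLast (koszulD R M b (i + 1) x) = koszulD R M (fun j => b j.castSucc) i (withLast x) := by
  funext t
  simp only [withLast, koszulD]
  rw [Fin.sum_univ_castSucc, dif_pos (Finset.mem_insert_self _ _), add_zero]
  refine Finset.sum_congr rfl fun j _ => ?_
  have hmem : j.castSucc ∈ insert (Fin.last r) (t.1.map Fin.castSuccEmb) ↔ j ∈ t.1 := by
    simp [Fin.castSucc_ne_last]
  by_cases h : j ∈ t.1
  · rw [dif_pos (hmem.mpr h), dif_pos h]
  · rw [dif_neg (hmem.not.mpr h), dif_neg h, Finset.filter_insert,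
      if_neg (Fin.castSucc_lt_last j).not_gt, card_filter_map_castSuccEmb_lt]
    congr 3
    simp [Finset.map_insert, Finset.insert_comm]

lemma withoutLast_koszulTransition (a : Fin (r + 1) → R) (e i : ℕ) (x : KoszulChain M (r + 1) i) :
    withoutLast (koszulTransition R M a e i x) =
      koszulTransition R M (fun j => a j.castSucc) e i (withoutLast x) := by
  funext t
  simp only [withoutLast, koszulTransition, Finset.prod_map, Fin.castSuccEmb_apply]

lemma withLast_koszulTransition (a : Fin (r + 1) → R) (e i : ℕ)
    (x : KoszulChain M (r + 1) (i + 1)) :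
    withLast (koszulTransition R M a e (i + 1) x) =
      a (Fin.last r) ^ e • koszulTransition R M (fun j => a j.castSucc) e i (withLast x) := by
  funext t
  simp only [withLast, koszulTransition, Pi.smul_apply, mul_smul, Fin.castSuccEmb_apply,
    Finset.prod_insert (last_notMem_map_castSuccEmb t.1), Finset.prod_map]

end Cone

end KoszulChain

open KoszulChain

section ProZero

variable {R : Type*} [CommRing R] (M : Type*) [AddCommGroup M] [Module R M] {r : ℕ}

/-- The transition map `H_{i+1}(M; a(m)) → H_{i+1}(M; a(n))` vanishes. -/
def KoszulTransitionVanishes (a : Fin r → R) (i n m : ℕ) : Prop :=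
  ∀ x : KoszulChain M r (i + 1), koszulD R M (fun j => a j ^ m) i x = 0 →
    ∃ y : KoszulChain M r (i + 2),
      koszulD R M (fun j => a j ^ n) (i + 1) y = koszulTransition R M a (m - n) (i + 1) x

/-- For `c = a (Fin.last r)` and `a'` the other entries of `a`: the connecting map
`H_{i+1}(M; a(m)) → H_i(M; a'(m))` of the cone sequence, followed by the transition map to
`H_i(M; a'(n))`, vanishes. -/
def LastComponentBounds (a : Fin (r + 1) → R) (i n m : ℕ) : Prop :=
  ∀ x : KoszulChain M (r + 1) (i + 1), koszulD R M (fun j => a j ^ m) i x = 0 →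
    ∃ z : KoszulChain M r (i + 1), koszulD R M (fun j => a j.castSucc ^ n) i z =
      a (Fin.last r) ^ (m - n) • koszulTransition R M (fun j => a j.castSucc) (m - n) i (withLast x)

variable {M}

lemma lastComponentBounds_succ (a : Fin (r + 1) → R) {i n m : ℕ}
    (h : KoszulTransitionVanishes M (fun j => a j.castSucc) i n m) :
    LastComponentBounds M a (i + 1) n m := by
  intro x hx
  have hcycle : koszulD R M (fun j => a j.castSucc ^ m) i (withLast x) = 0 := by
    rw [← withLast_koszulD (fun j => a j ^ m), hx]
    rfl
  obtain ⟨z, hz⟩ := h _ hcycle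
  exact ⟨a (Fin.last r) ^ (m - n) • z, by rw [koszulD_smul, hz]⟩

/-- In degree zero the cone sequence only shows that `c ^ m • withLast x` is a boundary; as the
colon submodules `(B : c ^ k)` of the boundaries stabilise, a bounded power of `c` suffices. -/
lemma exists_lastComponentBounds_zero [IsNoetherianRing R] [Module.Finite R M]
    (a : Fin (r + 1) → R) (n : ℕ) : ∃ m, n ≤ m ∧ LastComponentBounds M a 0 n m := by
  set c := a (Fin.last r)
  set a' : Fin r → R := fun j => a j.castSucc
  obtain ⟨k, hk⟩ := Submodule.exists_pow_smul_mem_of_pow_smul_mem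
    (LinearMap.range (koszulDₗ (M := M) (fun j => a' j ^ n) 0)) c
  refine ⟨n + k, Nat.le_add_right n k, fun x hx => ?_⟩
  have hboundary : c ^ (n + k) • withLast x =
      koszulD R M (fun j => a' j ^ n) 0 (koszulTransition R M a' k 1 (-withoutLast x)) := by
    have h := withoutLast_koszulD (fun j => a j ^ (n + k)) 0 x
    rw [hx, pow_zero, one_smul] at h
    rw [koszulD_koszulTransition, koszulTransition_degree_zero, koszulD_neg]
    exact eq_neg_of_add_eq_zero_right h.symm
  obtain ⟨z, hz⟩ := hk (n + k) (Nat.le_add_left k n) (withLast x) (hboundary ▸ ⟨_, rfl⟩)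
  refine ⟨z, ?_⟩
  rw [Nat.add_sub_cancel_left, koszulTransition_degree_zero]
  exact hz

lemma koszulTransitionVanishes_of_lastComponentBounds (a : Fin (r + 1) → R) {i n n₁ m : ℕ}
    (hn : n ≤ n₁) (hm : n₁ ≤ m) (hA : KoszulTransitionVanishes M (fun j => a j.castSucc) i n n₁)
    (hB : LastComponentBounds M a i n₁ m) : KoszulTransitionVanishes M a i n m := by
  obtain ⟨d₁, rfl⟩ := Nat.exists_eq_add_of_le hn
  obtain ⟨d₂, rfl⟩ := Nat.exists_eq_add_of_le hm
  set c := a (Fin.last r)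
  set a' : Fin r → R := fun j => a j.castSucc
  have hmn : n + d₁ + d₂ - n = d₁ + d₂ := by omega
  intro x hx
  obtain ⟨z, hz⟩ := hB x hx
  rw [Nat.add_sub_cancel_left] at hz
  have hcycle : koszulD R M (fun j => a' j ^ (n + d₁ + d₂)) i (withoutLast x) +
      ((-1 : ℤ) ^ i) • c ^ (n + d₁ + d₂) • withLast x = 0 := by
    rw [← withoutLast_koszulD (fun j => a j ^ (n + d₁ + d₂)), hx]
    rfl
  -- the first component of `x`, corrected by `z` to a cycle of `K(M; a'(n + d₁))`
  set u := koszulTransition R M a' d₂ (i + 1) (withoutLast x) + ((-1 : ℤ) ^ i) • c ^ (n + d₁) • z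
  have hu : koszulD R M (fun j => a' j ^ (n + d₁)) i u = 0 := by
    rw [koszulD_add, koszulD_koszulTransition, koszulD_zsmul, koszulD_smul, hz, smul_smul,
      ← pow_add, ← koszulTransition_smul, ← koszulTransition_smul, ← koszulTransition_add, hcycle]
    exact funext fun s => smul_zero _
  obtain ⟨y₀, hy₀⟩ := hA u hu
  rw [Nat.add_sub_cancel_left] at hy₀
  refine ⟨glue y₀ (c ^ d₁ • koszulTransition R M a' d₁ (i + 1) z), ext_withoutLast_withLast ?_ ?_⟩
  · rw [withoutLast_koszulD, withoutLast_glue, withLast_glue, hy₀, withoutLast_koszulTransition,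
      koszulTransition_add, koszulTransition_koszulTransition, koszulTransition_smul,
      koszulTransition_smul, hmn, add_comm d₁ d₂]
    module
  · rw [withLast_koszulD (fun j => a j ^ n), withLast_glue, withLast_koszulTransition, koszulD_smul,
      koszulD_koszulTransition, hz, koszulTransition_smul, koszulTransition_koszulTransition,
      smul_smul, ← pow_add, hmn]

lemma exists_koszulTransitionVanishes [IsNoetherianRing R] [Module.Finite R M] (a : Fin r → R)
    (i n : ℕ) : ∃ m, n ≤ m ∧ KoszulTransitionVanishes M a i n m := by
  induction r generalizing i n with
  | zero =>
    refine ⟨n, le_rfl, fun x _ => ⟨0, funext fun s => ?_⟩⟩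
    have := s.2 ▸ Finset.card_le_univ s.1
    simp at this
  | succ r ih =>
    obtain ⟨n₁, hn₁, hA⟩ := ih (fun j => a j.castSucc) i n
    obtain ⟨m, hm, hB⟩ : ∃ m, n₁ ≤ m ∧ LastComponentBounds M a i n₁ m := by
      cases i with
      | zero => exact exists_lastComponentBounds_zero a n₁
      | succ i =>
        obtain ⟨m, hm, h⟩ := ih (fun j => a j.castSucc) i n₁
        exact ⟨m, hm, lastComponentBounds_succ a h⟩
    exact ⟨m, hn₁.trans hm, koszulTransitionVanishes_of_lastComponentBounds a hn₁ hm hA hB⟩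

end ProZero

theorem statement1_general (R : Type*) [CommRing R] [IsNoetherianRing R]
    (M : Type*) [AddCommGroup M] [Module R M] [Module.Finite R M]
    (r : ℕ) (a : Fin r → R) (i₀ : ℕ) (n : ℕ) :
    ∃ m : ℕ, n ≤ m ∧
      ∀ x : {s : Finset (Fin r) // s.card = i₀ + 1} → M,
        koszulD R M (fun j => a j ^ m) i₀ x = 0 →
        ∃ y : {s : Finset (Fin r) // s.card = i₀ + 2} → M,
          koszulD R M (fun j => a j ^ n) (i₀ + 1) y =
            koszulTransition R M a (m - n) (i₀ + 1) x :=
  exists_koszulTransitionVanishes a i₀ n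

theorem statement1 (R : Type*) [CommRing R] [IsNoetherianRing R]
    (M : Type*) [AddCommGroup M] [Module R M] [Module.Finite R M]
    (r : ℕ) (a : Fin r → R) (i₀ : ℕ) (n : ℕ) (hn : 1 ≤ n) :
    ∃ m : ℕ, n ≤ m ∧
      ∀ x : {s : Finset (Fin r) // s.card = i₀ + 1} → M,
        koszulD R M (fun j => a j ^ m) i₀ x = 0 →
        ∃ y : {s : Finset (Fin r) // s.card = i₀ + 2} → M,
          koszulD R M (fun j => a j ^ n) (i₀ + 1) y =
            koszulTransition R M a (m - n) (i₀ + 1) x :=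
  statement1_general R M r a i₀ n
end

section
/- Let A be a noetherian commutative ring, let φ : A → B be a homomorphism of commutative rings which makes B into a finitely generated A-module, and let I ⊆ A be an ideal such that for every f ∈ I the induced map on localizations A_f → B_f is an isomorphism. Then there exists an integer N > 0 such that φ(I^N)·B ⊆ φ(A) (the ideal of B generated by the image of I^N is contained in the image of φ) and I^N ∩ ker(φ) = 0. -/
/-!
For `f ∈ I`, surjectivity of `A_f → B_f` says that every element of the cokernel `B / φ(A)`
is killed by a power of `f`, and injectivity says the same of every element of `ker φ`.
Both are finitely generated `A`-modules, so `I` lies in the radical of the ideal of elements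
of `A` killing both, and being finitely generated, some power `I ^ m` kills both. The first
half gives `φ(I ^ N) B ⊆ φ(A)` for `N ≥ m`; for the second, Artin–Rees writes `I ^ N ∩ ker φ`
as `I ^ (N - k) (I ^ k ∩ ker φ) ⊆ I ^ m ker φ = 0` once `N ≥ m + k`.
-/

namespace Submodule

variable {R M : Type*} [CommSemiring R] [AddCommMonoid M] [Module R M]

theorem mem_radical_colon_of_forall_pow_smul_mem {N P : Submodule R M} (hP : P.FG) {f : R}
    (h : ∀ p ∈ P, ∃ n : ℕ, f ^ n • p ∈ N) : f ∈ (N.colon P).radical := by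
  classical
  obtain ⟨s, rfl⟩ := hP
  rw [colon_span]
  replace h : ∀ p ∈ s, ∃ n : ℕ, f ^ n • p ∈ N := fun p hp => h p (subset_span hp)
  induction s using Finset.induction_on with
  | empty => simp [Ideal.radical_top]
  | insert a s _ ih =>
    rw [Finset.coe_insert, Set.insert_eq, colon_union, Ideal.radical_inf]
    obtain ⟨n, hn⟩ := h a (Finset.mem_insert_self a s)
    exact ⟨⟨n, mem_colon_singleton.2 hn⟩, ih fun p hp => h p (Finset.mem_insert_of_mem hp)⟩

theorem exists_pow_le_colon_of_forall_pow_smul_mem {I : Ideal R} (hI : I.FG)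
    {N P : Submodule R M} (hP : P.FG) (h : ∀ f ∈ I, ∀ p ∈ P, ∃ n : ℕ, f ^ n • p ∈ N) :
    ∃ m : ℕ, I ^ m ≤ N.colon P :=
  Ideal.exists_pow_le_of_le_radical_of_fg
    (fun f hf => mem_radical_colon_of_forall_pow_smul_mem hP (h f hf)) hI

theorem smul_le_of_le_colon {I : Ideal R} {N P : Submodule R M} (h : I ≤ N.colon P) :
    I • P ≤ N :=
  smul_le.2 fun _ hr p hp => mem_colon.1 (h hr) p hp

end Submodule

theorem Ideal.exists_pow_smul_top_inf_eq_bot {R M : Type*} [CommRing R] [IsNoetherianRing R]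
    [AddCommGroup M] [Module R M] [Module.Finite R M] (I : Ideal R) {N : Submodule R M}
    {m : ℕ} (h : I ^ m • N = ⊥) : ∃ k : ℕ, ∀ n ≥ k, I ^ n • ⊤ ⊓ N = ⊥ := by
  obtain ⟨k, hk⟩ := I.exists_pow_inf_eq_pow_smul N
  refine ⟨m + k, fun n hn => ?_⟩
  rw [hk n (by omega), eq_bot_iff, ← h]
  exact Submodule.smul_mono (Ideal.pow_le_pow_right (by omega)) inf_le_right

theorem statement3 (A B : Type*) [CommRing A] [IsNoetherianRing A] [CommRing B]
    [Algebra A B] [Module.Finite A B] (I : Ideal A)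
    (hloc : ∀ f ∈ I, Function.Bijective (Localization.awayMap (algebraMap A B) f)) :
    ∃ N : ℕ, 0 < N ∧
      (↑(Ideal.map (algebraMap A B) (I ^ N)) : Set B) ⊆ Set.range (algebraMap A B) ∧
      I ^ N ⊓ RingHom.ker (algebraMap A B) = ⊥ := by
  set K := RingHom.ker (algebraMap A B)
  obtain ⟨m₁, hcoker⟩ := Submodule.exists_pow_le_colon_of_forall_pow_smul_mem
    (IsNoetherian.noetherian I) (N := 1) (Module.Finite.fg_top (R := A) (M := B))
    fun f hf b _ => by
      obtain ⟨c, n, hc⟩ := Localization.awayMap_surjective_iff.1 (hloc f hf).2 b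
      exact ⟨n, Submodule.mem_one.2 ⟨c, by rw [hc, Algebra.smul_def, map_pow]⟩⟩
  obtain ⟨m₂, hker⟩ := Submodule.exists_pow_le_colon_of_forall_pow_smul_mem
    (IsNoetherian.noetherian I) (N := ⊥) (IsNoetherian.noetherian K)
    fun f hf a ha => Localization.awayMap_injective_iff.1 (hloc f hf).1 a ha
  obtain ⟨k, hAR⟩ := I.exists_pow_smul_top_inf_eq_bot
    (eq_bot_iff.2 (Submodule.smul_le_of_le_colon hker))
  refine ⟨m₁ + k + 1, by omega, fun b hb => ?_, ?_⟩
  · have hle : I ^ (m₁ + k + 1) • (⊤ : Submodule A B) ≤ 1 :=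
      Submodule.smul_le_of_le_colon ((Ideal.pow_le_pow_right (by omega)).trans hcoker)
    exact Submodule.mem_one.1 (hle (by simpa using hb))
  · simpa [Ideal.mul_top] using hAR (m₁ + k + 1) (by omega)
end

section
/- Let A be a noetherian local commutative ring and let (a_0, …, a_r) be a regular sequence in A with r ≥ 1. Fix an index i with 0 ≤ i ≤ r. Then the sequence (a_i S_j − a_j)_{j ≠ i} (taken in the order j = 0, 1, …, r, omitting j = i) is a regular sequence in the polynomial ring A[S_0, …, Ŝ_i, …, S_r] in the r variables S_j, j ≠ i. -/
/-!
Induct on the number of variables, identifying `MvPolynomial (Fin (n + 1)) R` with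
`MvPolynomial (Fin n) R[X]`; this turns the first form `f = a X₀ - b₀` into a constant. Modulo
`J[X]`, `f` is a nonzerodivisor as soon as `b₀` or `a` is one modulo `J` (compare lowest, resp.
highest, coefficients). Passing from `J` to `J[X] + (f)` keeps the other `b_j` regular in every
order: for `d` regular modulo `(J, b₀)`, swap to get `b₀` regular modulo `(J, d)`, hence `f`
regular modulo `(J, d)[X]`, and swap back in `R[X]`. A swap is the fact that `x` regular modulo
`I` and `y` regular modulo `(I, x)` make `x` regular modulo `(I, y)`.

In a noetherian local ring the nonunits `a₀, …, a_{s-1}` in front of the first unit `a_s` form a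
regular sequence in every order. If `s ≠ i`, killing `a_i S_s - a_s` makes `a_i` a unit, and from
then on every `a_i S_j - a_j` has a unit leading coefficient.
-/

/-- A list `xs = [x_1, …, x_n]` of elements of a commutative ring `R` is a regular
sequence if for each `k` the image of `x_{k+1}` in `R ⧸ (x_1, …, x_k)` is a
nonzerodivisor. -/
def IsRegularSequence {R : Type*} [CommRing R] (xs : List R) : Prop :=
  ∀ (k : ℕ) (hk : k < xs.length)
    (y : R ⧸ Ideal.span {r | r ∈ xs.take k}),
    Ideal.Quotient.mk (Ideal.span {r | r ∈ xs.take k}) (xs.get ⟨k, hk⟩) * y = 0 → y = 0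

section NonZeroDivisorMod

variable {R S : Type*} [CommRing R] [CommRing S] {I : Ideal R} {x y : R}

def IsNonZeroDivisorMod (I : Ideal R) (x : R) : Prop := ∀ g, x * g ∈ I → g ∈ I

theorem isNonZeroDivisorMod_iff :
    IsNonZeroDivisorMod I x ↔ ∀ z : R ⧸ I, Ideal.Quotient.mk I x * z = 0 → z = 0 := by
  refine ⟨fun h z hz ↦ ?_, fun h g hg ↦ ?_⟩
  · obtain ⟨g, rfl⟩ := Ideal.Quotient.mk_surjective z
    rw [← map_mul, Ideal.Quotient.eq_zero_iff_mem] at hz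
    exact Ideal.Quotient.eq_zero_iff_mem.mpr (h g hz)
  · rw [← Ideal.Quotient.eq_zero_iff_mem, map_mul] at hg
    exact Ideal.Quotient.eq_zero_iff_mem.mp (h _ hg)

theorem isNonZeroDivisorMod_iff_isSMulRegular :
    IsNonZeroDivisorMod I x ↔ IsSMulRegular (R ⧸ I) x := by
  rw [isNonZeroDivisorMod_iff, isSMulRegular_iff_right_eq_zero_of_smul]
  rfl

theorem isNonZeroDivisorMod_of_sup_eq_top (h : I ⊔ Ideal.span {x} = ⊤) :
    IsNonZeroDivisorMod I x := by
  intro g hg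
  obtain ⟨w, i, hi, hwi⟩ := Ideal.mem_span_singleton_sup.mp
    (sup_comm I _ ▸ h ▸ Submodule.mem_top : (1 : R) ∈ Ideal.span {x} ⊔ I)
  have : g = w * (x * g) + g * i := by linear_combination -g * hwi
  rw [this]
  exact I.add_mem (I.mul_mem_left w hg) (I.mul_mem_left g hi)

theorem IsNonZeroDivisorMod.swap (hx : IsNonZeroDivisorMod I x)
    (hxy : IsNonZeroDivisorMod (I ⊔ Ideal.span {x}) y) :
    IsNonZeroDivisorMod (I ⊔ Ideal.span {y}) x := by
  intro u hu
  rw [sup_comm, Ideal.mem_span_singleton_sup] at hu ⊢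
  obtain ⟨v, i, hi, hiv⟩ := hu
  obtain ⟨w, j, hj, hjw⟩ : ∃ w, ∃ j ∈ I, w * x + j = v := by
    rw [← Ideal.mem_span_singleton_sup, sup_comm]
    refine hxy v ?_
    rw [sup_comm, Ideal.mem_span_singleton_sup]
    exact ⟨u, -i, I.neg_mem hi, by linear_combination -hiv⟩
  refine ⟨w, u - w * y, hx _ ?_, by ring⟩
  have : x * (u - w * y) = i + j * y := by linear_combination -hiv - y * hjw
  rw [this]
  exact I.add_mem hi (I.mul_mem_right y hj)

theorem IsNonZeroDivisorMod.map_ringEquiv (e : R ≃+* S) (h : IsNonZeroDivisorMod I x) :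
    IsNonZeroDivisorMod (I.map (e : R →+* S)) (e x) := by
  intro g hg
  obtain ⟨g, rfl⟩ := e.surjective g
  simp only [Ideal.map_comap_of_equiv, Ideal.mem_comap, ← map_mul, RingEquiv.symm_apply_apply]
    at hg ⊢
  exact h g hg

end NonZeroDivisorMod

section RegularMod

open RingTheory.Sequence

variable {R S : Type*} [CommRing R] [CommRing S] {J : Ideal R} {x : R} {l : List R}

def IsRegularMod (J : Ideal R) (l : List R) : Prop :=
  ∀ (k : ℕ) (hk : k < l.length), IsNonZeroDivisorMod (J ⊔ Ideal.ofList (l.take k)) l[k]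

theorem isRegularSequence_iff_isRegularMod_bot : IsRegularSequence l ↔ IsRegularMod ⊥ l := by
  simp only [IsRegularSequence, IsRegularMod, bot_sup_eq, isNonZeroDivisorMod_iff,
    List.get_eq_getElem]

theorem isRegularSequence_iff_isWeaklyRegular : IsRegularSequence l ↔ IsWeaklyRegular R l := by
  rw [isRegularSequence_iff_isRegularMod_bot, isWeaklyRegular_iff]
  refine forall₂_congr fun k _ ↦ ?_
  rw [bot_sup_eq, isNonZeroDivisorMod_iff_isSMulRegular, smul_eq_mul, Ideal.mul_top]

theorem IsRegularSequence.isNonZeroDivisorMod_of_append {l₁ l₂ : List R}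
    (h : IsRegularSequence (l₁ ++ x :: l₂)) : IsNonZeroDivisorMod (Ideal.ofList l₁) x := by
  rw [isRegularSequence_iff_isRegularMod_bot] at h
  simpa using h l₁.length (by simp)

theorem IsRegularMod.cons (hx : IsNonZeroDivisorMod J x)
    (hl : IsRegularMod (J ⊔ Ideal.span {x}) l) : IsRegularMod J (x :: l) := by
  rintro (_ | k) hk
  · simpa using hx
  · simpa [sup_assoc] using hl k (by simpa using hk)

theorem IsRegularMod.map_ringEquiv (e : R ≃+* S) (h : IsRegularMod J l) :
    IsRegularMod (J.map (e : R →+* S)) (l.map e) := by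
  intro k hk
  have := (h k (by simpa using hk)).map_ringEquiv e
  rwa [Ideal.map_sup, Ideal.map_ofList, List.map_take, ← List.getElem_map e] at this

theorem isRegularMod_map_ringEquiv_iff (e : R ≃+* S) :
    IsRegularMod (J.map (e : R →+* S)) (l.map e) ↔ IsRegularMod J l := by
  refine ⟨fun h ↦ ?_, IsRegularMod.map_ringEquiv e⟩
  simpa [Ideal.comap_map_of_bijective _ e.bijective, Function.comp_def] using h.map_ringEquiv e.symm

end RegularMod

section Polynomial

open Polynomial

variable {R : Type*} [CommRing R] {I : Ideal R} {a b d : R}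

theorem IsNonZeroDivisorMod.polynomial_C (hd : IsNonZeroDivisorMod I d) :
    IsNonZeroDivisorMod (I.map (C : R →+* R[X])) (C d) := by
  intro g hg
  rw [Ideal.mem_map_C_iff] at hg ⊢
  exact fun n ↦ hd _ (by simpa only [coeff_C_mul] using hg n)

theorem coeff_linear_mul_zero (a b : R) (g : R[X]) :
    ((C a * X - C b) * g).coeff 0 = -(b * g.coeff 0) := by
  simp [sub_mul, mul_assoc]

theorem coeff_linear_mul_succ (a b : R) (g : R[X]) (n : ℕ) :
    ((C a * X - C b) * g).coeff (n + 1) = a * g.coeff n - b * g.coeff (n + 1) := by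
  simp [sub_mul, mul_assoc]

theorem isNonZeroDivisorMod_linear_of_right (a : R) (hb : IsNonZeroDivisorMod I b) :
    IsNonZeroDivisorMod (I.map C) (C a * X - C b) := by
  intro g hg
  rw [Ideal.mem_map_C_iff] at hg ⊢
  intro n
  induction n with
  | zero => exact hb _ (I.neg_mem_iff.mp (coeff_linear_mul_zero a b g ▸ hg 0))
  | succ n ih =>
    refine hb _ ?_
    have := I.sub_mem (I.mul_mem_left a ih) (coeff_linear_mul_succ a b g n ▸ hg (n + 1))
    rwa [sub_sub_cancel] at this

theorem isNonZeroDivisorMod_linear_of_left (b : R) (ha : IsNonZeroDivisorMod I a) :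
    IsNonZeroDivisorMod (I.map C) (C a * X - C b) := by
  intro g hg
  rw [Ideal.mem_map_C_iff] at hg ⊢
  have coeff_mem : ∀ j n, g.natDegree < n + j → g.coeff n ∈ I := by
    intro j
    induction j with
    | zero => intro n hn; simp [coeff_eq_zero_of_natDegree_lt (show g.natDegree < n from hn)]
    | succ j ih =>
      intro n hn
      refine ha _ ?_
      have := I.add_mem (coeff_linear_mul_succ a b g n ▸ hg (n + 1))
        (I.mul_mem_left b (ih (n + 1) (by omega)))
      rwa [sub_add_cancel] at this
  exact fun n ↦ coeff_mem (g.natDegree + 1) n (by omega)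

theorem IsNonZeroDivisorMod.map_C_sup_linear (a : R) (hb : IsNonZeroDivisorMod I b)
    (hd : IsNonZeroDivisorMod I d) (hdb : IsNonZeroDivisorMod (I ⊔ Ideal.span {b}) d) :
    IsNonZeroDivisorMod (I.map C ⊔ Ideal.span {C a * X - C b}) (C d) := by
  refine hd.polynomial_C.swap ?_
  simpa [Ideal.map_sup, Ideal.map_span] using isNonZeroDivisorMod_linear_of_right a (hb.swap hdb)

end Polynomial

section LinearForms

open MvPolynomial

variable {R : Type*} [CommRing R] {n : ℕ} {J : Ideal R} {a : R}

def IsPermutablyRegularBelow (J : Ideal R) (b : Fin n → R) (m : ℕ) : Prop :=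
  ∀ (P : Finset (Fin n)) (j : Fin n), j ∉ P → (∀ x ∈ P, (x : ℕ) < m) → (j : ℕ) < m →
    IsNonZeroDivisorMod (J ⊔ Ideal.span (b '' P)) (b j)

def UnitModAt (J : Ideal R) (a : R) (b : Fin n → R) (m : ℕ) : Prop :=
  ∀ h : m < n, J ⊔ Ideal.span {b ⟨m, h⟩} = ⊤ ∨ J ⊔ Ideal.span {a} = ⊤

theorem IsPermutablyRegularBelow.comp {N : ℕ} {a : Fin N → R} {s : ℕ}
    (h : IsPermutablyRegularBelow J a s) {f : Fin n → Fin N} (hf : Function.Injective f)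
    {m : ℕ} (hfm : ∀ k : Fin n, (k : ℕ) < m → (f k : ℕ) < s) :
    IsPermutablyRegularBelow J (a ∘ f) m := by
  intro P j hj hP hjm
  have := h (P.map ⟨f, hf⟩) (f j) (by simpa [hf.eq_iff] using hj)
    (by simpa using fun x hx ↦ hfm x (hP x hx)) (hfm j hjm)
  rwa [Finset.coe_map, Function.Embedding.coeFn_mk, Set.image_image] at this

theorem IsPermutablyRegularBelow.polynomial {b : Fin (n + 1) → R} {m : ℕ}
    (h : IsPermutablyRegularBelow J b m) (a : R) :
    IsPermutablyRegularBelow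
      (J.map Polynomial.C ⊔ Ideal.span {Polynomial.C a * Polynomial.X - Polynomial.C (b 0)})
      (fun j ↦ Polynomial.C (b j.succ)) (m - 1) := by
  intro P j hj hP hjm
  set P' := P.map (Fin.succEmb n)
  have h0 : 0 ∉ P' := by simp [P', Fin.succ_ne_zero]
  have hj' : j.succ ∉ P' := by simpa [P'] using hj
  have hP' : ∀ x ∈ P', (x : ℕ) < m := by
    simp only [P', Finset.mem_map, Fin.coe_succEmb, forall_exists_index, and_imp,
      forall_apply_eq_imp_iff₂, Fin.val_succ]
    exact fun x hx ↦ by have := hP x hx; omega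
  have hjm' : (j.succ : ℕ) < m := by rw [Fin.val_succ]; omega
  have hj0 : IsNonZeroDivisorMod (J ⊔ Ideal.span (b '' P') ⊔ Ideal.span {b 0}) (b j.succ) := by
    have := h (insert 0 P') j.succ (by simp [hj', Fin.succ_ne_zero])
      (by simpa using ⟨by omega, hP'⟩) hjm'
    rwa [Finset.coe_insert, Set.image_insert_eq, Ideal.span_insert, sup_comm (Ideal.span _),
      ← sup_assoc] at this
  convert IsNonZeroDivisorMod.map_C_sup_linear a (h P' 0 h0 hP' (by rw [Fin.val_zero]; omega))
    (h P' j.succ hj' hP' hjm') hj0 using 1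
  rw [Ideal.map_sup, Ideal.map_span, Set.image_image, sup_right_comm]
  simp [P', Set.image_image]

theorem UnitModAt.polynomial {b : Fin (n + 1) → R} {m : ℕ} (h : UnitModAt J a b m) :
    UnitModAt
      (J.map Polynomial.C ⊔ Ideal.span {Polynomial.C a * Polynomial.X - Polynomial.C (b 0)})
      (Polynomial.C a) (fun j ↦ Polynomial.C (b j.succ)) (m - 1) := by
  intro hm
  set f := Polynomial.C a * Polynomial.X - Polynomial.C (b 0)
  have map_eq_top (x : R) (hx : J ⊔ Ideal.span {x} = ⊤) :
      J.map Polynomial.C ⊔ Ideal.span {f} ⊔ Ideal.span {Polynomial.C x} = ⊤ := by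
    rw [eq_top_iff, ← Ideal.map_top Polynomial.C, ← hx, Ideal.map_sup, Ideal.map_span,
      Set.image_singleton]
    exact sup_le_sup_right le_sup_left _
  rcases Nat.eq_zero_or_pos m with rfl | hm0
  · refine .inr ?_
    rcases h n.succ_pos with hb | ha
    · rw [eq_top_iff, ← map_eq_top (b 0) hb]
      refine sup_le le_sup_left ((Ideal.span_singleton_le_iff_mem _).mpr ?_)
      rw [show Polynomial.C (b 0) = Polynomial.X * Polynomial.C a - f by simp only [f]; ring]
      exact sub_mem (Ideal.mul_mem_left _ _ (Ideal.mem_sup_right (Ideal.mem_span_singleton_self _)))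
        (Ideal.mem_sup_left (Ideal.mem_sup_right (Ideal.mem_span_singleton_self _)))
    · exact map_eq_top a ha
  · rcases h (by omega) with hb | ha
    · refine .inl ?_
      dsimp only
      rw [show (⟨m - 1, hm⟩ : Fin n).succ = ⟨m, by omega⟩ from
        Fin.ext (by simp only [Fin.succ_mk]; omega)]
      exact map_eq_top _ hb
    · exact .inr (map_eq_top a ha)

theorem IsPermutablyRegularBelow.isNonZeroDivisorMod_linear {b : Fin (n + 1) → R} {m : ℕ}
    (hperm : IsPermutablyRegularBelow J b m) (hunit : UnitModAt J a b m) :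
    IsNonZeroDivisorMod (J.map Polynomial.C)
      (Polynomial.C a * Polynomial.X - Polynomial.C (b 0)) := by
  rcases Nat.eq_zero_or_pos m with rfl | hm
  · rcases hunit n.succ_pos with hb | ha
    · exact isNonZeroDivisorMod_linear_of_right a (isNonZeroDivisorMod_of_sup_eq_top hb)
    · exact isNonZeroDivisorMod_linear_of_left _ (isNonZeroDivisorMod_of_sup_eq_top ha)
  · refine isNonZeroDivisorMod_linear_of_right a ?_
    simpa using hperm ∅ 0 (by simp) (by simp) hm

theorem IsNonZeroDivisorMod.mvPolynomial_C {σ : Type*} {I : Ideal R} {d : R}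
    (hd : IsNonZeroDivisorMod I d) :
    IsNonZeroDivisorMod (I.map (C : R →+* MvPolynomial σ R)) (C d) := by
  intro g hg
  rw [MvPolynomial.mem_map_C_iff] at hg ⊢
  exact fun n ↦ hd _ (by simpa only [coeff_C_mul] using hg n)

theorem isRegularMod_linearForms (J : Ideal R) (a : R) (b : Fin n → R) (m : ℕ)
    (hperm : IsPermutablyRegularBelow J b m) (hunit : UnitModAt J a b m) :
    IsRegularMod (J.map C) ((List.finRange n).map fun j ↦ C a * X j - C (b j)) := by
  induction n generalizing R m with
  | zero => intro k hk; simp at hk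
  | succ n ih =>
    let e : MvPolynomial (Fin (n + 1)) R ≃+* MvPolynomial (Fin n) (Polynomial R) :=
      ((renameEquiv R (_root_.finSuccEquiv n)).trans (optionEquivRight R (Fin n))).toRingEquiv
    have he_C (x : R) : e (C x) = C (Polynomial.C x) := by simp [e]
    have he_zero : e (C a * X 0 - C (b 0)) =
        C (Polynomial.C a * Polynomial.X - Polynomial.C (b 0)) := by simp [e]
    have he_succ (j : Fin n) : e (C a * X j.succ - C (b j.succ)) =
        C (Polynomial.C a) * X j - C (Polynomial.C (b j.succ)) := by simp [e]
    have he_map : (J.map C).map (e : MvPolynomial (Fin (n + 1)) R →+* _) =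
        (J.map Polynomial.C).map (C : _ →+* MvPolynomial (Fin n) _) := by
      rw [Ideal.map_map, Ideal.map_map]
      exact congrArg (Ideal.map · J) (RingHom.ext he_C)
    rw [← isRegularMod_map_ringEquiv_iff e, he_map, List.finRange_succ]
    simp only [List.map_cons, List.map_map, Function.comp_def, he_zero, he_succ]
    refine .cons (hperm.isNonZeroDivisorMod_linear hunit).mvPolynomial_C ?_
    rw [← Set.image_singleton, ← Ideal.map_span, ← Ideal.map_sup]
    exact ih _ _ _ _ (hperm.polynomial a) hunit.polynomial

end LinearForms

theorem List.mem_take_finRange {N s : ℕ} {x : Fin N} :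
    x ∈ (List.finRange N).take s ↔ (x : ℕ) < s := by
  rw [List.mem_take_iff_getElem]
  constructor
  · rintro ⟨i, hi, rfl⟩
    simp only [List.length_finRange, lt_inf_iff, List.getElem_finRange, Fin.cast_mk] at hi ⊢
    omega
  · intro hx
    exact ⟨x, by simp [hx], by simp⟩

section Local

open RingTheory.Sequence

variable {A : Type*} [CommRing A] [IsNoetherianRing A] [IsLocalRing A]

theorem isPermutablyRegularBelow_of_isRegularSequence {N : ℕ} {a : Fin N → A}
    (ha : IsRegularSequence ((List.finRange N).map a)) {s : ℕ}
    (hs : ∀ x : Fin N, (x : ℕ) < s → ¬IsUnit (a x)) : IsPermutablyRegularBelow ⊥ a s := by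
  classical
  intro P j hj hP hjs
  set B := (List.finRange N).take s
  have hB : IsWeaklyRegular A (B.map a) := by
    rw [isRegularSequence_iff_isWeaklyRegular, ← List.take_append_drop s (List.finRange N),
      List.map_append, isWeaklyRegular_append_iff] at ha
    exact ha.1
  obtain ⟨L, hL⟩ : ∃ L, B.Perm (P.toList ++ j :: L) := by
    obtain ⟨l, hl, hlB⟩ := List.subperm_of_subset (l₁ := P.toList ++ [j]) (by
      simpa [List.nodup_append, P.nodup_toList] using hj) (by
      intro x hx
      simp only [List.mem_append, Finset.mem_toList, List.mem_singleton] at hx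
      rcases hx with hx | rfl
      exacts [List.mem_take_finRange.mpr (hP x hx), List.mem_take_finRange.mpr hjs])
    obtain ⟨L, hL⟩ := hlB.exists_perm_append
    exact ⟨L, by simpa using hL.trans (hl.append_right L)⟩
  have := IsLocalRing.isWeaklyRegular_of_perm_of_subset_maximalIdeal hB (hL.map a) (by
    simp only [List.mem_map, forall_exists_index, and_imp, forall_apply_eq_imp_iff₂]
    exact fun x hx ↦ hs x (List.mem_take_finRange.mp hx))
  rw [← isRegularSequence_iff_isWeaklyRegular, List.map_append, List.map_cons] at this
  simpa [Ideal.ofList, Set.image] using this.isNonZeroDivisorMod_of_append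

end Local

theorem List.filterMap_finRange_eq_map_succAbove {β : Type*} {n : ℕ} (i : Fin (n + 1))
    (G : (j : Fin (n + 1)) → j ≠ i → β) :
    (List.finRange (n + 1)).filterMap (fun j ↦ if h : j = i then none else some (G j h)) =
      (List.finRange n).map fun k ↦ G (i.succAbove k) (i.succAbove_ne k) := by
  induction n with
  | zero =>
    obtain rfl := Fin.fin_one_eq_zero i
    simp [List.finRange_succ]
  | succ n ih =>
    cases i using Fin.cases with
    | zero =>
      simp [List.finRange_succ, List.filterMap_map, Function.comp_def, Fin.succ_ne_zero]
    | succ i =>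
      rw [List.finRange_succ, List.filterMap_cons, dif_neg (Fin.succ_ne_zero i).symm,
        List.filterMap_map]
      have := ih i (fun k h ↦ G k.succ (by simpa [Fin.succ_inj] using h))
      simp only [Function.comp_def, Fin.succ_inj]
      rw [this]
      simp [List.finRange_succ, Fin.succ_succAbove_succ]

theorem Fin.val_succAbove {n : ℕ} (i : Fin (n + 1)) (k : Fin n) :
    (i.succAbove k : ℕ) = if (k : ℕ) < i then (k : ℕ) else k + 1 := by
  unfold Fin.succAbove
  split_ifs <;> simp_all [Fin.lt_def]

theorem exists_forall_lt_not_isUnit {M : Type*} [Monoid M] {N : ℕ} (a : Fin N → M) :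
    ∃ s, (∀ x : Fin N, (x : ℕ) < s → ¬IsUnit (a x)) ∧ ∀ h : s < N, IsUnit (a ⟨s, h⟩) := by
  classical
  have hN : ∃ s, ∀ h : s < N, IsUnit (a ⟨s, h⟩) := ⟨N, fun h ↦ absurd h (lt_irrefl N)⟩
  exact ⟨Nat.find hN, fun x hx hu ↦ Nat.find_min hN hx fun _ ↦ hu, Nat.find_spec hN⟩

open MvPolynomial in
theorem statement5_general (A : Type) [CommRing A] [IsNoetherianRing A] [IsLocalRing A]
    (r : ℕ) (a : Fin (r + 1) → A)
    (hreg : IsRegularSequence ((List.finRange (r + 1)).map a)) (i : Fin (r + 1)) :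
    IsRegularSequence
      ((List.finRange (r + 1)).filterMap (fun j =>
        if h : j = i then none
        else some (C (a i) * X (⟨j, h⟩ : {j : Fin (r + 1) // j ≠ i}) - C (a j)))) := by
  obtain ⟨s, hs_nonunit, hs_unit⟩ := exists_forall_lt_not_isUnit a
  -- the number of entries of `a ∘ i.succAbove` taken from `a₀, …, a_{s-1}`
  let m := if (i : ℕ) < s then s - 1 else s
  have hperm : IsPermutablyRegularBelow ⊥ (a ∘ i.succAbove) m :=
    (isPermutablyRegularBelow_of_isRegularSequence hreg hs_nonunit).comp
      Fin.succAbove_right_injective fun k hk ↦ by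
      simp only [m] at hk; rw [Fin.val_succAbove]; split_ifs at hk ⊢ <;> omega
  have hunit : UnitModAt ⊥ (a i) (a ∘ i.succAbove) m := by
    intro h
    simp only [bot_sup_eq, Ideal.span_singleton_eq_top, Function.comp_apply]
    have hs : s < r + 1 := by simp only [m] at h; split_ifs at h <;> omega
    by_cases his : (i : ℕ) = s
    · exact .inr (by rw [show i = ⟨s, hs⟩ from Fin.ext his]; exact hs_unit hs)
    · have hsucc : i.succAbove ⟨m, h⟩ = ⟨s, hs⟩ := by
        ext
        rw [Fin.val_succAbove]
        simp only [m]
        split_ifs <;> omega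
      exact .inl (hsucc ▸ hs_unit hs)
  rw [List.filterMap_finRange_eq_map_succAbove, isRegularSequence_iff_isRegularMod_bot]
  have := (isRegularMod_linearForms ⊥ (a i) _ m hperm hunit).map_ringEquiv
    (renameEquiv A (finSuccAboveEquiv i)).toRingEquiv
  simpa [List.map_map, Function.comp_def, finSuccAboveEquiv_apply] using this

open MvPolynomial in
theorem statement5 (A : Type) [CommRing A] [IsNoetherianRing A] [IsLocalRing A]
    (r : ℕ) (hr : 1 ≤ r) (a : Fin (r + 1) → A)
    (hreg : IsRegularSequence ((List.finRange (r + 1)).map a)) (i : Fin (r + 1)) :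
    IsRegularSequence
      ((List.finRange (r + 1)).filterMap (fun j =>
        if h : j = i then none
        else some (C (a i) * X (⟨j, h⟩ : {j : Fin (r + 1) // j ≠ i}) - C (a j)))) :=
  statement5_general A r a hreg i
end
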